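/- arXiv:2403.04330 — 5 statements merged into one kernel-verified Lean document; each statement's English description precedes it below -/
import Mathlib

section
/- Let C ⊂ ℝ^n be a finite set of unit vectors (a spherical code) whose angle set A_C = {⟨x,y⟩ : x,y ∈ C, x ≠ y} consists entirely of rational numbers and whose vectors span all of ℝ^n. Then there exist a dimension q ≥ n, a natural number m, a positive real scaling factor c, and a linear isometric embedding f : ℝ^n → ℝ^q such that for every x ∈ C the vector c · f(x) lies in ℤ^q and has squared Euclidean norm m; that is, C can be embedded into the shell s_m of the integer lattice ℤ^q via an isometry and a scaling. -/
open scoped RealInnerProductSpace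

open Finset Matrix

lemma rat_four_squares (d : ℚ) (hd : 0 ≤ d) : ∃ s : Fin 4 → ℚ, d = ∑ j, s j ^ 2 := by
  obtain ⟨a, b, c, e, habce⟩ := Nat.sum_four_squares (d.num.toNat * d.den)
  have hden : (d.den : ℚ) ≠ 0 := Nat.cast_ne_zero.mpr d.den_nz
  refine ⟨![(a : ℚ)/d.den, (b : ℚ)/d.den, (c : ℚ)/d.den, (e : ℚ)/d.den], ?_⟩
  have hnum : ((d.num.toNat : ℕ) : ℚ) = (d.num : ℚ) := by
    exact_mod_cast congrArg (Int.cast : ℤ → ℚ) (Int.toNat_of_nonneg (Rat.num_nonneg.mpr hd))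
  have hN : ((a ^ 2 + b ^ 2 + c ^ 2 + e ^ 2 : ℕ) : ℚ) = d * (d.den : ℚ) ^ 2 := by
    rw [habce]
    push_cast
    rw [hnum]
    have hq : (d.num : ℚ) = d * d.den :=
      (div_eq_iff hden).mp (Rat.num_div_den d)
    rw [hq]
    ring
  have hcast : ((a:ℚ)^2 + b^2 + c^2 + e^2) = d * (d.den:ℚ)^2 := by push_cast at hN ⊢; linarith
  rw [Fin.sum_univ_four]
  simp only [Matrix.cons_val_zero, Matrix.cons_val_one, Matrix.head_cons, Matrix.cons_val_two,
    Matrix.tail_cons, Matrix.cons_val_three]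
  field_simp
  linarith

lemma exists_factorization {n : ℕ} (G : Matrix (Fin n) (Fin n) ℚ) (hsym : G.IsSymm)
    (hpd : ∀ u : Fin n → ℚ, u ≠ 0 → 0 < u ⬝ᵥ G.mulVec u) :
    (∃ M : Matrix (Fin (4 * n)) (Fin n) ℚ, Mᵀ * M = G) ∧ IsUnit G.det := by
  classical
  set B : LinearMap.BilinForm ℚ (Fin n → ℚ) := Matrix.toBilin' G with hB
  have hBapp : ∀ x y, B x y = x ⬝ᵥ G.mulVec y := Matrix.toBilin'_apply' G
  have hBsym : B.IsSymm := by
    refine ⟨fun x y => ?_⟩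
    simp only [RingHom.id_apply, hBapp, Matrix.mulVec, dotProduct, Finset.mul_sum]
    rw [Finset.sum_comm]
    exact Finset.sum_congr rfl fun k _ => Finset.sum_congr rfl fun l _ => by
      rw [hsym.apply l k]; ring
  obtain ⟨v0, hv0⟩ := LinearMap.BilinForm.exists_orthogonal_basis (LinearMap.BilinForm.isSymm_iff.1 hBsym)
  set e : Fin (Module.finrank ℚ (Fin n → ℚ)) ≃ Fin n := finCongr (Module.finrank_fin_fun ℚ)
  set v : Module.Basis (Fin n) ℚ (Fin n → ℚ) := v0.reindex e with hv
  have hvapp : ∀ i, v i = v0 (e.symm i) := fun i => by rw [hv, Module.Basis.reindex_apply]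
  have hortho : ∀ i j, i ≠ j → B (v i) (v j) = 0 := by
    intro i j hij
    rw [hvapp, hvapp]
    exact hv0 (fun h => hij (by simpa using congrArg e h))
  set d : Fin n → ℚ := fun i => B (v i) (v i) with hd
  have hdpos : ∀ i, 0 < d i := by
    intro i
    rw [hd]
    simp only [hBapp]
    exact hpd _ (v.ne_zero i)
  choose s hs using fun i => rat_four_squares (d i) (hdpos i).le
  set A : Matrix (Fin n) (Fin n) ℚ := (Pi.basisFun ℚ (Fin n)).toMatrix v with hA
  haveI : Invertible A := (Pi.basisFun ℚ (Fin n)).invertibleToMatrix v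
  have hAdet : IsUnit A.det := Matrix.isUnit_det_of_invertible A
  have hAentry : ∀ k i, A k i = v i k := by
    intro k i
    rw [hA, Module.Basis.toMatrix_apply]
    simp
  have key : Aᵀ * G * A = Matrix.diagonal d := by
    ext i j
    have h1 : (Aᵀ * G * A) i j = B (v i) (v j) := by
      rw [hBapp, Matrix.mul_apply]
      simp only [Matrix.mul_apply, Matrix.transpose_apply, hAentry, dotProduct, Matrix.mulVec,
        Finset.sum_mul, Finset.mul_sum]
      rw [Finset.sum_comm]
      refine Finset.sum_congr rfl fun k _ => Finset.sum_congr rfl fun l _ => by ring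
    rw [h1]
    rcases eq_or_ne i j with rfl | hij
    · simp [Matrix.diagonal_apply_eq, hd]
    · rw [hortho i j hij, Matrix.diagonal_apply_ne _ hij]
  have h1 : A * A⁻¹ = 1 := Matrix.mul_nonsing_inv A hAdet
  have hG : G = (A⁻¹)ᵀ * Matrix.diagonal d * A⁻¹ := by
    calc G = ((A⁻¹)ᵀ * Aᵀ) * G * (A * A⁻¹) := by
            rw [← Matrix.transpose_mul, h1, Matrix.transpose_one, Matrix.one_mul,
              Matrix.mul_one]
      _ = (A⁻¹)ᵀ * (Aᵀ * G * A) * A⁻¹ := by simp only [Matrix.mul_assoc]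
      _ = (A⁻¹)ᵀ * Matrix.diagonal d * A⁻¹ := by rw [key]
  set N : Matrix (Fin 4 × Fin n) (Fin n) ℚ := fun p k => if p.2 = k then s k p.1 else 0 with hN
  have hNN : Nᵀ * N = Matrix.diagonal d := by
    ext k l
    rw [Matrix.mul_apply]
    simp only [Matrix.transpose_apply]; simp only [hN]
    rw [Fintype.sum_prod_type_right]
    rcases eq_or_ne k l with rfl | hkl
    · simp only [Matrix.diagonal_apply_eq]
      rw [hs k]
      rw [Finset.sum_comm]
      refine Finset.sum_congr rfl fun i _ => ?_
      simp [ite_and, Finset.sum_ite_eq', pow_two]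
    · rw [Matrix.diagonal_apply_ne _ hkl]
      refine Finset.sum_eq_zero fun i _ => Finset.sum_eq_zero fun j _ => ?_
      rcases eq_or_ne i k with rfl | hik
      · simp [Ne.symm hkl, hkl]
      · simp [hik]
  set M0 : Matrix (Fin 4 × Fin n) (Fin n) ℚ := N * A⁻¹ with hM0
  have hM0fac : M0ᵀ * M0 = G := by
    rw [hM0, Matrix.transpose_mul, hG, Matrix.transpose_nonsing_inv, ← hNN]
    simp only [Matrix.mul_assoc]
  constructor
  · refine ⟨M0.submatrix (finProdFinEquiv.symm : Fin (4 * n) ≃ Fin 4 × Fin n) id, ?_⟩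
    have h2 : (M0.submatrix (finProdFinEquiv.symm : Fin (4 * n) ≃ Fin 4 × Fin n) id)ᵀ =
        M0ᵀ.submatrix id (finProdFinEquiv.symm : Fin (4 * n) ≃ Fin 4 × Fin n) := by
      rw [Matrix.transpose_submatrix]
    rw [h2, Matrix.submatrix_mul_equiv, hM0fac, Matrix.submatrix_id_id]
  · rw [hG, Matrix.det_mul, Matrix.det_mul, Matrix.det_transpose, Matrix.det_nonsing_inv,
      Matrix.det_diagonal, Ring.inverse_eq_inv']
    have h0 : A.det ≠ 0 := IsUnit.ne_zero hAdet
    exact ((isUnit_iff_ne_zero.mpr (inv_ne_zero h0)).mul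
      (isUnit_iff_ne_zero.mpr (Finset.prod_ne_zero_iff.mpr fun i _ => (hdpos i).ne'))).mul
      (isUnit_iff_ne_zero.mpr (inv_ne_zero h0))

/-- A spherical code `C` in `ℝ^n` (a finite set of unit vectors) with rational angle set
whose vectors span all of `ℝ^n` can be embedded, via a linear isometry and a positive
scaling, into a shell `s_m` of an integer lattice `ℤ^q` with `q ≥ n`: for every `x ∈ C`,
the scaled image `c • f x` has integer coordinates and squared Euclidean norm `m`. -/
theorem rational_spherical_code_embeds_into_integer_shell
    (n : ℕ) (C : Finset (EuclideanSpace ℝ (Fin n)))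
    (hunit : ∀ x ∈ C, ‖x‖ = 1)
    (hrat : ∀ x ∈ C, ∀ y ∈ C, x ≠ y → ∃ r : ℚ, ⟪x, y⟫ = (r : ℝ))
    (hspan : Submodule.span ℝ (C : Set (EuclideanSpace ℝ (Fin n))) = ⊤) :
    ∃ (q : ℕ) (m : ℕ) (c : ℝ)
      (f : EuclideanSpace ℝ (Fin n) →ₗᵢ[ℝ] EuclideanSpace ℝ (Fin q)),
      n ≤ q ∧ 0 < c ∧
      ∀ x ∈ C, (∀ i : Fin q, ∃ z : ℤ, (c • f x) i = (z : ℝ)) ∧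
        ‖c • f x‖ ^ 2 = (m : ℝ) := by
  classical
  -- a basis of V consisting of elements of C
  obtain ⟨t, hts, htsp, hli⟩ := exists_linearIndependent ℝ (C : Set (EuclideanSpace ℝ (Fin n)))
  haveI : Fintype t := Set.Finite.fintype (C.finite_toSet.subset hts)
  let B0 : Module.Basis t ℝ (EuclideanSpace ℝ (Fin n)) := Module.Basis.mk hli (by
    rw [Subtype.range_coe, htsp, hspan])
  have hcard : Fintype.card t = n := by
    have h1 := Module.finrank_eq_card_basis B0
    rw [finrank_euclideanSpace_fin] at h1
    omega
  let e : Fin n ≃ t := (Fintype.equivFinOfCardEq hcard).symm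
  let b : Module.Basis (Fin n) ℝ (EuclideanSpace ℝ (Fin n)) := B0.reindex (Fintype.equivFinOfCardEq hcard)
  have hb : ∀ i, b i = ((e i : t) : EuclideanSpace ℝ (Fin n)) := by
    intro i
    simp only [b, Module.Basis.reindex_apply, Module.Basis.mk_apply, e, B0]
  have hbC : ∀ i, b i ∈ C := fun i => by rw [hb]; exact hts (e i).2
  -- rational Gram matrix
  have hex : ∀ i j : Fin n, ∃ r : ℚ, ⟪b i, b j⟫ = (r : ℝ) := by
    intro i j
    rcases eq_or_ne (b i) (b j) with h | h
    · refine ⟨1, ?_⟩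
      rw [h, real_inner_self_eq_norm_sq, hunit _ (hbC j)]
      norm_num
    · exact hrat _ (hbC i) _ (hbC j) h
  choose G0 hG0 using hex
  set Gm : Matrix (Fin n) (Fin n) ℚ := Matrix.of G0 with hGmdef
  have hGm : ∀ i j, ((Gm i j : ℚ) : ℝ) = ⟪b i, b j⟫ := fun i j => (hG0 i j).symm
  have hsym : Gm.IsSymm := by
    rw [Matrix.IsSymm.ext_iff]
    intro i j
    have : ((Gm j i : ℚ) : ℝ) = ((Gm i j : ℚ) : ℝ) := by
      rw [hGm, hGm, real_inner_comm]
    exact_mod_cast this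
  -- positive definiteness over ℚ
  have hquad : ∀ u : Fin n → ℚ, ((u ⬝ᵥ Gm.mulVec u : ℚ) : ℝ) =
      ⟪∑ i, (u i : ℝ) • b i, ∑ j, (u j : ℝ) • b j⟫ := by
    intro u
    simp only [sum_inner, inner_sum, real_inner_smul_left, real_inner_smul_right,
      Finset.mul_sum]
    simp only [← hGm]
    push_cast [Matrix.mulVec, dotProduct, Finset.mul_sum]
    exact Finset.sum_congr rfl fun i _ => Finset.sum_congr rfl fun j _ => by
      rw [hsym.apply i j]; ring
  have hpd : ∀ u : Fin n → ℚ, u ≠ 0 → 0 < u ⬝ᵥ Gm.mulVec u := by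
    intro u hu
    have hz : (∑ i, (u i : ℝ) • b i) ≠ 0 := by
      intro hzero
      apply hu
      have hall := (Fintype.linearIndependent_iff.mp b.linearIndependent)
        (fun i => (u i : ℝ)) hzero
      funext i
      have h := hall i
      simp only [Pi.zero_apply] at h ⊢
      exact_mod_cast h
    have : (0 : ℝ) < ((u ⬝ᵥ Gm.mulVec u : ℚ) : ℝ) := by
      rw [hquad u, real_inner_self_eq_norm_sq]
      exact pow_pos (norm_pos_iff.mpr hz) 2
    exact_mod_cast this
  obtain ⟨⟨M, hM⟩, hdet⟩ := exists_factorization Gm hsym hpd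
  -- the linear map
  set Mr : Matrix (Fin (4 * n)) (Fin n) ℝ := M.map ((↑) : ℚ → ℝ) with hMr
  set f0 : EuclideanSpace ℝ (Fin n) →ₗ[ℝ] EuclideanSpace ℝ (Fin (4 * n)) :=
    (WithLp.linearEquiv 2 ℝ (Fin (4 * n) → ℝ)).symm.toLinearMap ∘ₗ
      Mr.mulVecLin ∘ₗ b.equivFun.toLinearMap with hf0
  have happ : ∀ (x : EuclideanSpace ℝ (Fin n)) (i : Fin (4 * n)),
      f0 x i = ∑ k, (M i k : ℝ) * b.equivFun x k := by
    intro x i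
    simp only [hf0, LinearMap.coe_comp, Function.comp_apply, LinearEquiv.coe_coe,
      Matrix.mulVecLin_apply, WithLp.linearEquiv_symm_apply]
    rfl
  have hMM : ∀ k l, (∑ i, (M i k : ℝ) * (M i l : ℝ)) = ⟪b k, b l⟫ := by
    intro k l
    rw [← hGm k l, ← hM, Matrix.mul_apply]
    push_cast
    exact Finset.sum_congr rfl fun i _ => by rw [Matrix.transpose_apply]
  have hinner : ∀ x y : EuclideanSpace ℝ (Fin n), ⟪f0 x, f0 y⟫ = ⟪x, y⟫ := by
    intro x y
    have hL : ⟪f0 x, f0 y⟫ =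
        ∑ i, (∑ k, (M i k : ℝ) * b.equivFun x k) * (∑ l, (M i l : ℝ) * b.equivFun y l) := by
      rw [PiLp.inner_apply]
      exact Finset.sum_congr rfl fun i _ => by
        rw [happ, happ, RCLike.inner_apply, conj_trivial]; exact mul_comm _ _
    rw [hL]
    conv_rhs => rw [← b.sum_equivFun x, ← b.sum_equivFun y]
    simp only [sum_inner, inner_sum, real_inner_smul_left, real_inner_smul_right,
      Finset.sum_mul, Finset.mul_sum]
    rw [Finset.sum_comm]
    refine Finset.sum_congr rfl fun k _ => ?_
    rw [Finset.sum_comm]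
    refine Finset.sum_congr rfl fun l _ => ?_
    rw [← hMM l k]
    simp only [Finset.mul_sum]
    exact Finset.sum_congr rfl fun i _ => by ring
  set F : EuclideanSpace ℝ (Fin n) →ₗᵢ[ℝ] EuclideanSpace ℝ (Fin (4 * n)) := f0.isometryOfInner hinner with hF
  have hFapp : ∀ x : EuclideanSpace ℝ (Fin n), F x = f0 x := fun x => by
    rw [hF, LinearMap.coe_isometryOfInner]
  -- rational coordinates
  have hcoord : ∀ p : {x // x ∈ C} × Fin (4 * n), ∃ s : ℚ, F p.1.1 p.2 = (s : ℝ) := by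
    rintro ⟨⟨x, hx⟩, i⟩
    have hw : ∀ j : Fin n, ∃ r : ℚ, ⟪b j, x⟫ = (r : ℝ) := by
      intro j
      rcases eq_or_ne (b j) x with h | h
      · refine ⟨1, ?_⟩
        rw [h, real_inner_self_eq_norm_sq, hunit _ hx]
        norm_num
      · exact hrat _ (hbC j) _ hx h
    choose w hw' using hw
    set r : Fin n → ℚ := Gm⁻¹.mulVec w with hr
    set Gr : Matrix (Fin n) (Fin n) ℝ := Gm.map ((↑) : ℚ → ℝ) with hGr
    have hGrdet : IsUnit Gr.det := by
      have h2 : Gr.det = ((Gm.det : ℚ) : ℝ) := by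
        rw [hGr]; exact ((Rat.castHom ℝ).map_det Gm).symm
      rw [h2]
      exact isUnit_iff_ne_zero.mpr (Rat.cast_ne_zero.mpr hdet.ne_zero)
    have hu1 : Gr.mulVec (b.equivFun x) = fun j => ⟪b j, x⟫ := by
      funext j
      simp only [Matrix.mulVec, dotProduct, hGr, Matrix.map_apply]
      conv_rhs => rw [← b.sum_equivFun x]
      rw [inner_sum]
      exact Finset.sum_congr rfl fun l _ => by
        rw [real_inner_smul_right, hGm]; ring
    have hu2 : Gr.mulVec (fun k => (r k : ℝ)) = fun j => ⟪b j, x⟫ := by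
      have hGmr : Gm.mulVec r = w := by
        rw [hr, Matrix.mulVec_mulVec, Matrix.mul_nonsing_inv Gm hdet, Matrix.one_mulVec]
      funext j
      have : (Gm.mulVec r) j = w j := by rw [hGmr]
      simp only [Matrix.mulVec, dotProduct, hGr, Matrix.map_apply]
      rw [hw' j]
      have := congrArg ((↑) : ℚ → ℝ) this
      push_cast [Matrix.mulVec, dotProduct] at this
      exact this
    have hueq : b.equivFun x = fun k => (r k : ℝ) := by
      have h1 := congrArg (Gr⁻¹.mulVec) (hu1.trans hu2.symm)
      rwa [Matrix.mulVec_mulVec, Matrix.mulVec_mulVec, Matrix.nonsing_inv_mul Gr hGrdet,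
        Matrix.one_mulVec, Matrix.one_mulVec] at h1
    refine ⟨(M.mulVec r) i, ?_⟩
    rw [hFapp, happ, hueq]
    push_cast [Matrix.mulVec, dotProduct]
    rfl
  choose sf hsf using hcoord
  set P : ℕ := ∏ p : {x // x ∈ C} × Fin (4 * n), (sf p).den with hP
  have hPpos : 0 < P := Finset.prod_pos fun p _ => (sf p).pos
  refine ⟨4 * n, P ^ 2, (P : ℝ), F, by omega, by positivity, ?_⟩
  intro x hx
  constructor
  · intro i
    set s : ℚ := sf (⟨x, hx⟩, i) with hs
    obtain ⟨k, hk⟩ : (s.den : ℕ) ∣ P := Finset.dvd_prod_of_mem (fun p => (sf p).den) (Finset.mem_univ ((⟨x, hx⟩, i) : {x // x ∈ C} × Fin (4 * n)))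
    refine ⟨s.num * k, ?_⟩
    have hsnum : (s.num : ℚ) = s * s.den :=
      (div_eq_iff (by exact_mod_cast s.den_nz : (s.den : ℚ) ≠ 0)).mp (Rat.num_div_den s)
    have hQ : (P : ℚ) * s = ((s.num * k : ℤ) : ℚ) := by
      rw [hk]
      push_cast
      rw [hsnum]
      ring
    have hcoordval : F x i = (s : ℝ) := hsf (⟨x, hx⟩, i)
    have : ((P : ℝ)• F x) i = (P : ℝ) * (F x i) := rfl
    rw [this, hcoordval]
    have := congrArg ((↑) : ℚ → ℝ) hQ
    push_cast at this ⊢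
    linarith
  · have hnorm : ‖(P : ℝ) • F x‖ = (P : ℝ) := by
      rw [norm_smul, F.norm_map, hunit x hx, Real.norm_natCast, mul_one]
    rw [hnorm]
    push_cast
    ring
end

section
/- Sh(8, 5, 7) ≥ 1024: there exists a set of 1024 vectors in ℤ^8, each of squared Euclidean norm 7, such that the inner product between any two distinct vectors in the set is at most 5. -/
set_option maxRecDepth 40000

private def Pats : List (Fin 8 → ℤ) :=
  [![0,1,1,1,1,1,1,1],
   ![2,0,0,1,0,1,1,0],
   ![2,1,1,1,0,0,0,0],
   ![2,0,1,0,0,1,0,1],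
   ![2,0,1,0,1,0,1,0],
   ![2,1,0,0,1,1,0,0],
   ![2,1,0,0,0,0,1,1],
   ![2,0,0,1,1,0,0,1],
   ![0,2,1,0,0,0,1,1],
   ![1,2,0,0,0,1,0,1],
   ![1,2,1,0,1,0,0,0],
   ![0,2,1,1,0,1,0,0],
   ![1,2,0,1,0,0,1,0],
   ![0,2,0,0,1,1,1,0],
   ![0,2,0,1,1,0,0,1],
   ![0,0,2,1,0,1,0,1],
   ![0,1,2,0,1,0,0,1],
   ![1,0,2,1,1,0,0,0],
   ![1,0,2,0,0,0,1,1],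
   ![1,1,2,0,0,1,0,0],
   ![0,0,2,0,1,1,1,0],
   ![0,1,2,1,0,0,1,0],
   ![0,1,1,2,0,0,0,1],
   ![0,0,1,2,1,1,0,0],
   ![1,1,0,2,1,0,0,0],
   ![1,0,0,2,0,1,0,1],
   ![1,0,1,2,0,0,1,0],
   ![0,1,0,2,0,1,1,0],
   ![0,0,0,2,1,0,1,1],
   ![0,1,0,1,2,1,0,0],
   ![0,1,1,0,2,0,1,0],
   ![1,1,0,0,2,0,0,1],
   ![0,0,0,0,2,1,1,1],
   ![1,0,0,1,2,0,1,0],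
   ![1,0,1,0,2,1,0,0],
   ![0,0,1,1,2,0,0,1],
   ![0,0,1,0,0,2,1,1],
   ![0,0,0,1,1,2,1,0],
   ![1,0,0,0,1,2,0,1],
   ![1,0,1,1,0,2,0,0],
   ![1,1,0,0,0,2,1,0],
   ![0,1,0,1,0,2,0,1],
   ![0,1,1,0,1,2,0,0],
   ![1,0,0,1,0,0,2,1],
   ![0,1,0,0,0,1,2,1],
   ![0,0,1,0,1,0,2,1],
   ![0,1,0,1,1,0,2,0],
   ![0,0,1,1,0,1,2,0],
   ![1,1,1,0,0,0,2,0],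
   ![1,0,0,0,1,1,2,0],
   ![1,0,1,0,1,0,0,2],
   ![0,0,1,1,0,0,1,2],
   ![1,0,0,0,0,1,1,2],
   ![1,1,0,1,0,0,0,2],
   ![0,1,0,0,1,0,1,2],
   ![0,0,0,1,1,1,0,2],
   ![0,1,1,0,0,1,0,2]]

private def Sh857 : Finset (Fin 8 → ℤ) :=
  Pats.toFinset.biUnion fun p => Fintype.piFinset fun i => ({p i, -p i} : Finset ℤ)

private lemma mem_Sh857 {v : Fin 8 → ℤ} (hv : v ∈ Sh857) :
    ∃ p ∈ Pats, ∀ i, v i = p i ∨ v i = -p i := by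
  rw [Sh857, Finset.mem_biUnion] at hv
  obtain ⟨p, hp, hvp⟩ := hv
  refine ⟨p, List.mem_toFinset.mp hp, fun i => ?_⟩
  have := (Fintype.mem_piFinset.mp hvp) i
  simpa using this

private lemma Pats_nonneg : ∀ p ∈ Pats, ∀ i, 0 ≤ p i := by decide

private lemma Pats_norm : ∀ p ∈ Pats, ∑ i, p i ^ 2 = 7 := by decide

private lemma Pats_ip : ∀ p ∈ Pats, ∀ q ∈ Pats, p ≠ q → ∑ i, p i * q i ≤ 5 := by decide

/-- Sh(8, 5, 7) ≥ 1024: there exists a set of 1024 vectors in ℤ^8, each of squared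
Euclidean norm 7, such that the inner product between any two distinct vectors is at most 5. -/
theorem sh_8_5_7_ge :
    ∃ S : Finset (Fin 8 → ℤ),
      S.card = 1024 ∧
      (∀ v ∈ S, ∑ i, v i ^ 2 = 7) ∧
      (∀ u ∈ S, ∀ v ∈ S, u ≠ v → ∑ i, u i * v i ≤ 5) := by
  refine ⟨Sh857, ?_, ?_, ?_⟩
  · -- cardinality
    have hdisj : ∀ p ∈ Pats.toFinset, ∀ q ∈ Pats.toFinset, p ≠ q →
        Disjoint (Fintype.piFinset fun i => ({p i, -p i} : Finset ℤ))
                 (Fintype.piFinset fun i => ({q i, -q i} : Finset ℤ)) := by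
      intro p hp q hq hpq
      rw [Finset.disjoint_left]
      intro v hv1 hv2
      apply hpq
      funext i
      have h1 := (Fintype.mem_piFinset.mp hv1) i
      have h2 := (Fintype.mem_piFinset.mp hv2) i
      simp only [Finset.mem_insert, Finset.mem_singleton] at h1 h2
      have hpn := Pats_nonneg p (List.mem_toFinset.mp hp) i
      have hqn := Pats_nonneg q (List.mem_toFinset.mp hq) i
      rcases h1 with h1 | h1 <;> rcases h2 with h2 | h2 <;> omega
    rw [Sh857, Finset.card_biUnion hdisj]
    simp only [Fintype.card_piFinset]
    decide
  · -- norms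
    intro v hv
    obtain ⟨p, hp, hvp⟩ := mem_Sh857 hv
    have : ∀ i, v i ^ 2 = p i ^ 2 := by
      intro i
      rcases hvp i with h | h <;> rw [h] <;> ring
    calc ∑ i, v i ^ 2 = ∑ i, p i ^ 2 := Finset.sum_congr rfl fun i _ => this i
      _ = 7 := Pats_norm p hp
  · -- inner products
    intro u hu v hv huv
    obtain ⟨p, hp, hup⟩ := mem_Sh857 hu
    obtain ⟨q, hq, hvq⟩ := mem_Sh857 hv
    by_cases hpq : p = q
    · subst hpq
      obtain ⟨j, hj⟩ := Function.ne_iff.mp huv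
      have hkey : u j * v j = -(p j ^ 2) ∧ p j ≠ 0 := by
        rcases hup j with h1 | h1 <;> rcases hvq j with h2 | h2
        · exact absurd (h1.trans h2.symm) hj
        · exact ⟨by rw [h1, h2]; ring, fun h0 => hj (by rw [h1, h2, h0]; ring)⟩
        · exact ⟨by rw [h1, h2]; ring, fun h0 => hj (by rw [h1, h2, h0]; ring)⟩
        · exact absurd (h1.trans h2.symm) hj
      have hbound : ∑ i, u i * v i ≤ ∑ i, Function.update (fun i => p i ^ 2) j (-(p j ^ 2)) i := by
        apply Finset.sum_le_sum
        intro i _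
        by_cases hij : i = j
        · subst hij
          rw [Function.update_self, hkey.1]
        · rw [Function.update_of_ne hij]
          rcases hup i with h1 | h1 <;> rcases hvq i with h2 | h2 <;> rw [h1, h2] <;>
            nlinarith [sq_nonneg (p i)]
      have hsum : ∑ i, Function.update (fun i => p i ^ 2) j (-(p j ^ 2)) i
          = (∑ i, p i ^ 2) - 2 * p j ^ 2 := by
        rw [Finset.sum_update_of_mem (Finset.mem_univ j)]
        rw [Finset.sdiff_singleton_eq_erase, Finset.sum_erase_eq_sub (Finset.mem_univ j)]
        ring
      have hsq : 1 ≤ p j ^ 2 := by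
        have := hkey.2
        have h1 : 1 ≤ |p j| := Int.one_le_abs this
        calc (1 : ℤ) = 1 ^ 2 := by ring
          _ ≤ |p j| ^ 2 := by exact pow_le_pow_left₀ (by norm_num) h1 2
          _ = p j ^ 2 := sq_abs _
      have := Pats_norm p hp
      linarith [hbound, hsum, hsq, this]
    · have hbound : ∑ i, u i * v i ≤ ∑ i, p i * q i := by
        apply Finset.sum_le_sum
        intro i _
        have hpn := Pats_nonneg p hp i
        have hqn := Pats_nonneg q hq i
        rcases hup i with h1 | h1 <;> rcases hvq i with h2 | h2 <;> rw [h1, h2] <;> nlinarith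
      linarith [Pats_ip p hp q hq hpq]
end

section
/- Sh(10, 3, 5) ≥ 1192: there exists a set of 1192 vectors in ℤ^10, each of squared Euclidean norm 5, such that the inner product between any two distinct vectors in the set is at most 3. -/
set_option maxRecDepth 100000

/-- The 36 supports: 5-subsets of `Fin 10` with pairwise intersections of size ≤ 3. -/
def shA : Fin 36 → Finset (Fin 10) :=
  ![ {0,1,2,3,8}, {1,2,3,5,9}, {1,2,3,6,7}, {0,1,2,4,6}, {1,2,4,5,7}, {0,1,2,7,9},
     {0,1,3,4,5}, {1,2,4,8,9}, {1,2,5,6,8}, {0,1,3,6,9}, {1,3,4,6,8}, {1,3,4,7,9},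
     {0,1,4,7,8}, {1,3,5,7,8}, {0,1,5,6,7}, {0,1,5,8,9}, {1,4,5,6,9}, {0,2,3,4,9},
     {0,2,3,5,7}, {1,6,7,8,9}, {2,3,4,5,6}, {0,2,4,5,8}, {2,3,4,7,8}, {0,2,5,6,9},
     {2,3,6,8,9}, {0,2,6,7,8}, {0,4,6,8,9}, {0,3,4,6,7}, {2,4,6,7,9}, {2,5,7,8,9},
     {0,3,5,6,8}, {3,4,5,8,9}, {0,3,7,8,9}, {3,5,6,7,9}, {0,4,5,7,9}, {4,5,6,7,8} ]

/-- All ±1 sign vectors supported exactly on `T`. -/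
def signVecs (T : Finset (Fin 10)) : Finset (Fin 10 → ℤ) :=
  (Finset.univ : Finset ({x // x ∈ T} → Bool)).image
    (fun s i => if h : i ∈ T then (if s ⟨i, h⟩ then 1 else -1) else 0)

/-- The 40 vectors `2σ eᵢ + τ e_{i+1}`. -/
def shg : Fin 10 × Bool × Bool → (Fin 10 → ℤ) :=
  fun p i =>
    if i = p.1 then (if p.2.1 then 2 else -2)
    else if i = p.1 + 1 then (if p.2.2 then 1 else -1) else 0

def shTA : Finset (Fin 10 → ℤ) := Finset.univ.image shg

def shTB : Finset (Fin 10 → ℤ) :=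
  Finset.univ.biUnion (fun k : Fin 36 => signVecs (shA k))

lemma signVecs_out {T : Finset (Fin 10)} {v : Fin 10 → ℤ} (hv : v ∈ signVecs T)
    {i : Fin 10} (hi : i ∉ T) : v i = 0 := by
  obtain ⟨s, -, rfl⟩ := Finset.mem_image.mp hv
  simp [hi]

lemma signVecs_in {T : Finset (Fin 10)} {v : Fin 10 → ℤ} (hv : v ∈ signVecs T)
    {i : Fin 10} (hi : i ∈ T) : v i = 1 ∨ v i = -1 := by
  obtain ⟨s, -, rfl⟩ := Finset.mem_image.mp hv
  simp only [dif_pos hi]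
  cases s ⟨i, hi⟩ <;> simp

lemma signVecs_abs_le {T : Finset (Fin 10)} {v : Fin 10 → ℤ} (hv : v ∈ signVecs T)
    (i : Fin 10) : |v i| ≤ 1 := by
  by_cases hi : i ∈ T
  · rcases signVecs_in hv hi with h | h <;> rw [h] <;> decide
  · rw [signVecs_out hv hi]; decide

lemma signVecs_support {T : Finset (Fin 10)} {v : Fin 10 → ℤ} (hv : v ∈ signVecs T)
    (i : Fin 10) : i ∈ T ↔ v i ≠ 0 := by
  constructor
  · intro hi
    rcases signVecs_in hv hi with h | h <;> rw [h] <;> decide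
  · intro h
    by_contra hi
    exact h (signVecs_out hv hi)

lemma signVecs_card (T : Finset (Fin 10)) : (signVecs T).card = 2 ^ T.card := by
  rw [signVecs, Finset.card_image_of_injective, Finset.card_univ, Fintype.card_fun,
      Fintype.card_bool, Fintype.card_coe]
  intro s s' h
  funext x
  have h2 := congrFun h x.1
  simp only [dif_pos x.2] at h2
  cases hs : s ⟨x.1, x.2⟩ <;> cases hs' : s' ⟨x.1, x.2⟩ <;>
    rw [hs, hs'] at h2 <;> simp_all

lemma signVecs_disjoint {T T' : Finset (Fin 10)} (h : T ≠ T') :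
    Disjoint (signVecs T) (signVecs T') := by
  rw [Finset.disjoint_left]
  intro v hv hv'
  apply h
  ext i
  rw [signVecs_support hv i, signVecs_support hv' i]

lemma signVecs_norm {T : Finset (Fin 10)} (hT : T.card = 5) {v : Fin 10 → ℤ}
    (hv : v ∈ signVecs T) : ∑ i, v i ^ 2 = 5 := by
  have key : ∀ i : Fin 10, v i ^ 2 = if i ∈ T then 1 else 0 := by
    intro i
    by_cases hi : i ∈ T
    · rcases signVecs_in hv hi with h | h <;> rw [h, if_pos hi] <;> ring
    · rw [signVecs_out hv hi, if_neg hi]; ring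
  rw [Finset.sum_congr rfl (fun i _ => key i), Finset.sum_ite_mem, Finset.univ_inter,
      Finset.sum_const, hT]
  decide

lemma signVecs_ip_diff {T T' : Finset (Fin 10)} (h3 : (T ∩ T').card ≤ 3)
    {u v : Fin 10 → ℤ} (hu : u ∈ signVecs T) (hv : v ∈ signVecs T') :
    ∑ i, u i * v i ≤ 3 := by
  have key : ∀ i : Fin 10, u i * v i ≤ if i ∈ T ∩ T' then 1 else 0 := by
    intro i
    by_cases hi : i ∈ T
    · by_cases hi' : i ∈ T'
      · rw [if_pos (Finset.mem_inter.mpr ⟨hi, hi'⟩)]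
        rcases signVecs_in hu hi with h | h <;> rcases signVecs_in hv hi' with h' | h' <;>
          rw [h, h'] <;> decide
      · rw [signVecs_out hv hi', if_neg (fun hc => hi' (Finset.mem_inter.mp hc).2), mul_zero]
    · rw [signVecs_out hu hi, if_neg (fun hc => hi (Finset.mem_inter.mp hc).1), zero_mul]
  calc ∑ i, u i * v i ≤ ∑ i : Fin 10, if i ∈ T ∩ T' then (1 : ℤ) else 0 :=
        Finset.sum_le_sum (fun i _ => key i)
    _ = ∑ _i ∈ Finset.univ ∩ (T ∩ T'), (1 : ℤ) := Finset.sum_ite_mem _ _ _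
    _ = ((T ∩ T').card : ℤ) := by rw [Finset.univ_inter, Finset.sum_const]; simp
    _ ≤ 3 := by exact_mod_cast h3

lemma signVecs_ip_same {T : Finset (Fin 10)} (hT : T.card = 5)
    {u v : Fin 10 → ℤ} (hu : u ∈ signVecs T) (hv : v ∈ signVecs T) (hne : u ≠ v) :
    ∑ i, u i * v i ≤ 3 := by
  obtain ⟨i₀, hi₀⟩ := Function.ne_iff.mp hne
  have hi₀T : i₀ ∈ T := by
    by_contra hc
    exact hi₀ (by rw [signVecs_out hu hc, signVecs_out hv hc])
  have hterm : u i₀ * v i₀ = -1 := by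
    rcases signVecs_in hu hi₀T with h | h <;> rcases signVecs_in hv hi₀T with h' | h' <;>
      rw [h, h'] <;> first | rfl | (exfalso; apply hi₀; rw [h, h'])
  have key : ∀ i ∈ Finset.univ.erase i₀, u i * v i ≤ if i ∈ T then (1 : ℤ) else 0 := by
    intro i _
    by_cases hi : i ∈ T
    · rw [if_pos hi]
      rcases signVecs_in hu hi with h | h <;> rcases signVecs_in hv hi with h' | h' <;>
        rw [h, h'] <;> decide
    · rw [signVecs_out hu hi, if_neg hi, zero_mul]
  have hbound : ∑ i ∈ Finset.univ.erase i₀, u i * v i ≤ 4 := by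
    calc ∑ i ∈ Finset.univ.erase i₀, u i * v i
        ≤ ∑ i ∈ Finset.univ.erase i₀, if i ∈ T then (1 : ℤ) else 0 := Finset.sum_le_sum key
      _ = ∑ _i ∈ Finset.univ.erase i₀ ∩ T, (1 : ℤ) := Finset.sum_ite_mem _ _ _
      _ = ((Finset.univ.erase i₀ ∩ T).card : ℤ) := by rw [Finset.sum_const]; simp
      _ = ((T.erase i₀).card : ℤ) := by
            congr 2
            ext i
            simp [Finset.mem_erase, Finset.mem_inter, and_comm]
      _ = 4 := by rw [Finset.card_erase_of_mem hi₀T, hT]; rfl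
  calc ∑ i, u i * v i = ∑ i ∈ Finset.univ.erase i₀, u i * v i + u i₀ * v i₀ :=
        (Finset.sum_erase_add _ _ (Finset.mem_univ i₀)).symm
    _ ≤ 4 + (-1) := by rw [hterm]; exact add_le_add_left hbound _
    _ = 3 := by ring

lemma shg_abs_sum : ∀ p : Fin 10 × Bool × Bool, ∑ i, |shg p i| = 3 := by decide

lemma shg_ip_B {T : Finset (Fin 10)} {v : Fin 10 → ℤ} (hv : v ∈ signVecs T)
    (p : Fin 10 × Bool × Bool) : ∑ i, shg p i * v i ≤ 3 := by
  calc ∑ i, shg p i * v i ≤ ∑ i, |shg p i| := by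
        apply Finset.sum_le_sum
        intro i _
        calc shg p i * v i ≤ |shg p i * v i| := le_abs_self _
          _ = |shg p i| * |v i| := abs_mul _ _
          _ ≤ |shg p i| * 1 := mul_le_mul_of_nonneg_left (signVecs_abs_le hv i) (abs_nonneg _)
          _ = |shg p i| := mul_one _
    _ = 3 := shg_abs_sum p

lemma shA_card : ∀ k : Fin 36, (shA k).card = 5 := by decide

lemma shA_ne : ∀ k l : Fin 36, k ≠ l → shA k ≠ shA l := by decide

lemma shA_inter : ∀ k l : Fin 36, shA k = shA l ∨ ((shA k) ∩ (shA l)).card ≤ 3 := by decide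

lemma shTA_card : shTA.card = 40 := by decide

lemma shTA_norm : ∀ v ∈ shTA, ∑ i, v i ^ 2 = 5 := by decide

lemma shTA_ip : ∀ u ∈ shTA, ∀ v ∈ shTA, u ≠ v → ∑ i, u i * v i ≤ 3 := by decide

lemma shTA_two : ∀ p : Fin 10 × Bool × Bool, shg p p.1 = 2 ∨ shg p p.1 = -2 := by decide

lemma shTA_TB_disjoint : Disjoint shTA shTB := by
  rw [Finset.disjoint_left]
  intro v hv hv'
  obtain ⟨p, -, rfl⟩ := Finset.mem_image.mp hv
  obtain ⟨k, -, hk⟩ := Finset.mem_biUnion.mp hv'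
  have h1 := signVecs_abs_le hk p.1
  rcases shTA_two p with h | h <;> rw [h] at h1 <;> exact absurd h1 (by decide)

lemma shTB_card : shTB.card = 1152 := by
  rw [shTB, Finset.card_biUnion]
  · rw [Finset.sum_congr rfl (fun k _ => by rw [signVecs_card, shA_card k])]
    simp
  · intro k _ l _ hkl
    exact signVecs_disjoint (shA_ne k l hkl)

/-- Sh(10, 3, 5) ≥ 1192: there exists a set of 1192 vectors in ℤ^10, each of squared
Euclidean norm 5, such that the inner product between any two distinct vectors is at most 3. -/
theorem sh_10_3_5_ge :
    ∃ S : Finset (Fin 10 → ℤ),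
      S.card = 1192 ∧
      (∀ v ∈ S, ∑ i, v i ^ 2 = 5) ∧
      (∀ u ∈ S, ∀ v ∈ S, u ≠ v → ∑ i, u i * v i ≤ 3) := by
  refine ⟨shTA ∪ shTB, ?_, ?_, ?_⟩
  · rw [Finset.card_union_of_disjoint shTA_TB_disjoint, shTA_card, shTB_card]
  · intro v hv
    rcases Finset.mem_union.mp hv with h | h
    · exact shTA_norm v h
    · obtain ⟨k, -, hk⟩ := Finset.mem_biUnion.mp h
      exact signVecs_norm (shA_card k) hk
  · intro u hu v hv hne
    rcases Finset.mem_union.mp hu with h | h <;> rcases Finset.mem_union.mp hv with h' | h'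
    · exact shTA_ip u h v h' hne
    · obtain ⟨p, -, rfl⟩ := Finset.mem_image.mp h
      obtain ⟨k, -, hk⟩ := Finset.mem_biUnion.mp h'
      exact shg_ip_B hk p
    · obtain ⟨p, -, rfl⟩ := Finset.mem_image.mp h'
      obtain ⟨k, -, hk⟩ := Finset.mem_biUnion.mp h
      calc ∑ i, u i * shg p i = ∑ i, shg p i * u i := by
            exact Finset.sum_congr rfl (fun i _ => mul_comm _ _)
        _ ≤ 3 := shg_ip_B hk p
    · obtain ⟨k, -, hk⟩ := Finset.mem_biUnion.mp h
      obtain ⟨l, -, hl⟩ := Finset.mem_biUnion.mp h'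
      rcases shA_inter k l with heq | hle
      · exact signVecs_ip_same (shA_card k) hk (heq ▸ hl) hne
      · exact signVecs_ip_diff hle hk hl
end

section
/- Sh(11, 3, 5) ≥ 2156: there exists a set of 2156 vectors in ℤ^11, each of squared Euclidean norm 5, such that the inner product between any two distinct vectors in the set is at most 3. -/
/-- Table: `posn k i` is the position (0..4) of coordinate `i` within the `k`-th block
of a Steiner system S(4,5,11), or 5 if `i` is not in the block. -/
def posn : Fin 66 → Fin 11 → ℕ :=
![![0,1,2,3,4,5,5,5,5,5,5],
![0,1,2,5,5,3,4,5,5,5,5],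
![0,1,2,5,5,5,5,3,4,5,5],
![0,1,2,5,5,5,5,5,5,3,4],
![0,1,5,2,5,3,5,4,5,5,5],
![0,1,5,2,5,5,3,5,5,4,5],
![0,1,5,2,5,5,5,5,3,5,4],
![0,1,5,5,2,3,5,5,5,5,4],
![0,1,5,5,2,5,3,5,4,5,5],
![0,1,5,5,2,5,5,3,5,4,5],
![0,1,5,5,5,2,5,5,3,4,5],
![0,1,5,5,5,5,2,3,5,5,4],
![0,5,1,2,5,3,5,5,4,5,5],
![0,5,1,2,5,5,3,5,5,5,4],
![0,5,1,2,5,5,5,3,5,4,5],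
![0,5,1,5,2,3,5,5,5,4,5],
![0,5,1,5,2,5,3,4,5,5,5],
![0,5,1,5,2,5,5,5,3,5,4],
![0,5,1,5,5,2,5,3,5,5,4],
![0,5,1,5,5,5,2,5,3,4,5],
![0,5,5,1,2,3,4,5,5,5,5],
![0,5,5,1,2,5,5,3,5,5,4],
![0,5,5,1,2,5,5,5,3,4,5],
![0,5,5,1,5,2,5,5,5,3,4],
![0,5,5,1,5,5,2,3,4,5,5],
![0,5,5,5,1,2,5,3,4,5,5],
![0,5,5,5,1,5,2,5,5,3,4],
![0,5,5,5,5,1,2,3,5,4,5],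
![0,5,5,5,5,1,2,5,3,5,4],
![0,5,5,5,5,5,5,1,2,3,4],
![5,0,1,2,5,3,5,5,5,4,5],
![5,0,1,2,5,5,3,5,4,5,5],
![5,0,1,2,5,5,5,3,5,5,4],
![5,0,1,5,2,3,5,4,5,5,5],
![5,0,1,5,2,5,3,5,5,5,4],
![5,0,1,5,2,5,5,5,3,4,5],
![5,0,1,5,5,2,5,5,3,5,4],
![5,0,1,5,5,5,2,3,5,4,5],
![5,0,5,1,2,3,5,5,4,5,5],
![5,0,5,1,2,5,3,4,5,5,5],
![5,0,5,1,2,5,5,5,5,3,4],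
![5,0,5,1,5,2,3,5,5,5,4],
![5,0,5,1,5,5,5,2,3,4,5],
![5,0,5,5,1,2,3,5,5,4,5],
![5,0,5,5,1,5,5,2,3,5,4],
![5,0,5,5,5,1,2,3,4,5,5],
![5,0,5,5,5,1,5,2,5,3,4],
![5,0,5,5,5,5,1,5,2,3,4],
![5,5,0,1,2,3,5,5,5,5,4],
![5,5,0,1,2,5,3,5,5,4,5],
![5,5,0,1,2,5,5,3,4,5,5],
![5,5,0,1,5,2,3,4,5,5,5],
![5,5,0,1,5,5,5,5,2,3,4],
![5,5,0,5,1,2,3,5,4,5,5],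
![5,5,0,5,1,5,5,2,5,3,4],
![5,5,0,5,5,1,2,5,5,3,4],
![5,5,0,5,5,1,5,2,3,4,5],
![5,5,0,5,5,5,1,2,3,5,4],
![5,5,5,0,1,2,5,3,5,4,5],
![5,5,5,0,1,5,2,5,3,5,4],
![5,5,5,0,5,1,2,5,3,4,5],
![5,5,5,0,5,1,5,2,3,5,4],
![5,5,5,0,5,5,1,2,5,3,4],
![5,5,5,5,0,1,2,3,5,5,4],
![5,5,5,5,0,1,5,5,2,3,4],
![5,5,5,5,0,5,1,2,3,4,5]]

/-- Type A vectors: ±2 at position p, ±1 at position p+1 (mod 11). -/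
def vA (p : Fin 11) (e d : Bool) : Fin 11 → ℤ := fun i =>
  if i = p then (if e then 2 else -2)
  else if i = p + 1 then (if d then 1 else -1) else 0

/-- Type B vectors: ±1 on the 5 coordinates of block k, signs given by s. -/
def vB (k : Fin 66) (s : Fin 5 → Bool) : Fin 11 → ℤ := fun i =>
  if h : posn k i < 5 then (if s ⟨posn k i, h⟩ then 1 else -1) else 0

/-- Indicator of the support of block k. -/
def ind (k : Fin 66) (i : Fin 11) : ℤ := if posn k i < 5 then 1 else 0

set_option maxRecDepth 20000 in
set_option maxHeartbeats 4000000 in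
theorem fBnorm : ∀ k : Fin 66, ∑ i, ind k i = 5 := by decide

set_option maxRecDepth 40000 in
set_option maxHeartbeats 8000000 in
theorem fBpair : ∀ k k' : Fin 66, k ≠ k' → ∑ i, ind k i * ind k' i ≤ 3 := by decide

set_option maxRecDepth 20000 in
set_option maxHeartbeats 4000000 in
theorem fsurj : ∀ (k : Fin 66) (j : Fin 5), ∃ i : Fin 11, posn k i = j.val := by decide

set_option maxRecDepth 20000 in
set_option maxHeartbeats 4000000 in
theorem fAnorm : ∀ (p : Fin 11) (e d : Bool), ∑ i, (vA p e d i)^2 = 5 := by decide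

set_option maxRecDepth 40000 in
set_option maxHeartbeats 8000000 in
theorem fAA : ∀ a b : Fin 11 × Bool × Bool, a ≠ b →
    ∑ i, vA a.1 a.2.1 a.2.2 i * vA b.1 b.2.1 b.2.2 i ≤ 3 := by decide

set_option maxRecDepth 40000 in
set_option maxHeartbeats 8000000 in
theorem fAabs : ∀ (p : Fin 11) (e d : Bool) (k : Fin 66),
    ∑ i, |vA p e d i| * ind k i ≤ 3 := by decide

set_option maxRecDepth 40000 in
set_option maxHeartbeats 8000000 in
theorem fAinj : ∀ a b : Fin 11 × Bool × Bool,
    vA a.1 a.2.1 a.2.2 = vA b.1 b.2.1 b.2.2 → a = b := by decide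

lemma vB_sq (k : Fin 66) (s : Fin 5 → Bool) (i : Fin 11) : (vB k s i)^2 = ind k i := by
  unfold vB ind
  split
  · split <;> norm_num
  · norm_num

lemma abs_vB (k : Fin 66) (s : Fin 5 → Bool) (i : Fin 11) : |vB k s i| = ind k i := by
  unfold vB ind
  split
  · split <;> norm_num
  · norm_num

lemma ind_sq (k : Fin 66) (i : Fin 11) : ind k i * ind k i = ind k i := by
  unfold ind; split <;> norm_num

lemma ip_abs (u v : Fin 11 → ℤ) : ∑ i, u i * v i ≤ ∑ i, |u i| * |v i| :=
  Finset.sum_le_sum fun i _ => by rw [← abs_mul]; exact le_abs_self _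

lemma ipAB (p : Fin 11) (e d : Bool) (k : Fin 66) (s : Fin 5 → Bool) :
    ∑ i, vA p e d i * vB k s i ≤ 3 := by
  calc ∑ i, vA p e d i * vB k s i ≤ ∑ i, |vA p e d i| * |vB k s i| := ip_abs _ _
    _ = ∑ i, |vA p e d i| * ind k i := by simp only [abs_vB]
    _ ≤ 3 := fAabs p e d k

lemma ipBA (p : Fin 11) (e d : Bool) (k : Fin 66) (s : Fin 5 → Bool) :
    ∑ i, vB k s i * vA p e d i ≤ 3 := by
  calc ∑ i, vB k s i * vA p e d i = ∑ i, vA p e d i * vB k s i :=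
        Finset.sum_congr rfl fun i _ => mul_comm _ _
    _ ≤ 3 := ipAB p e d k s

lemma ipBBdiff (k k' : Fin 66) (s s' : Fin 5 → Bool) (hk : k ≠ k') :
    ∑ i, vB k s i * vB k' s' i ≤ 3 := by
  calc ∑ i, vB k s i * vB k' s' i ≤ ∑ i, |vB k s i| * |vB k' s' i| := ip_abs _ _
    _ = ∑ i, ind k i * ind k' i := by simp only [abs_vB]
    _ ≤ 3 := fBpair k k' hk

lemma ipBBsame (k : Fin 66) (s s' : Fin 5 → Bool) (hss : s ≠ s') :
    ∑ i, vB k s i * vB k s' i ≤ 3 := by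
  obtain ⟨j0, hj0⟩ := Function.ne_iff.mp hss
  obtain ⟨i0, hi0⟩ := fsurj k j0
  have key : ∑ i, vB k s i * vB k s' i ≤ ∑ i, (ind k i - if i = i0 then 2 else 0) := by
    apply Finset.sum_le_sum
    intro i _
    by_cases hi : i = i0
    · subst hi
      have h5 : posn k i < 5 := by rw [hi0]; exact j0.isLt
      have hfin : (⟨posn k i, h5⟩ : Fin 5) = j0 := Fin.ext hi0
      simp only [vB, ind, dif_pos h5, if_pos h5, if_pos rfl, hfin]
      cases hs : s j0 <;> cases hs' : s' j0 <;> simp_all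
    · rw [if_neg hi, sub_zero]
      unfold vB ind
      split
      · split <;> split <;> norm_num
      · norm_num
  calc ∑ i, vB k s i * vB k s' i
      ≤ ∑ i, (ind k i - if i = i0 then 2 else 0) := key
    _ = (∑ i, ind k i) - ∑ i, (if i = i0 then (2:ℤ) else 0) := Finset.sum_sub_distrib _ _
    _ = 5 - 2 := by rw [fBnorm]; simp
    _ = 3 := by norm_num

/-- Parameter space. -/
abbrev Pa := (Fin 11 × Bool × Bool) ⊕ (Fin 66 × (Fin 5 → Bool))

def fv : Pa → (Fin 11 → ℤ)
  | .inl a => vA a.1 a.2.1 a.2.2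
  | .inr b => vB b.1 b.2

lemma vA_big (p : Fin 11) (e d : Bool) : |vA p e d p| = 2 := by
  unfold vA
  rw [if_pos rfl]
  cases e <;> norm_num

lemma vB_small (k : Fin 66) (s : Fin 5 → Bool) (i : Fin 11) : |vB k s i| ≤ 1 := by
  rw [abs_vB]; unfold ind; split <;> norm_num

theorem fv_inj : Function.Injective fv := by
  rintro (⟨p, e, d⟩ | ⟨k, s⟩) (⟨p', e', d'⟩ | ⟨k', s'⟩) h
  · exact congrArg Sum.inl (fAinj (p, e, d) (p', e', d') h)
  · exfalso
    have h1 : |vA p e d p| = |vB k' s' p| := by rw [show vA p e d = vB k' s' from h]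
    rw [vA_big] at h1
    have := vB_small k' s' p
    omega
  · exfalso
    have h1 : |vA p' e' d' p'| = |vB k s p'| := by rw [← show vB k s = vA p' e' d' from h]
    rw [vA_big] at h1
    have := vB_small k s p'
    omega
  · have hind : ∀ i, ind k i = ind k' i := by
      intro i
      rw [← abs_vB k s i, ← abs_vB k' s' i, show vB k s = vB k' s' from h]
    have hkk : k = k' := by
      by_contra hne
      have h1 := fBpair k k' hne
      have h2 : ∑ i, ind k i * ind k' i = 5 := by
        calc ∑ i, ind k i * ind k' i = ∑ i, ind k i := by
              refine Finset.sum_congr rfl fun i _ => ?_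
              rw [← hind i, ind_sq]
          _ = 5 := fBnorm k
      omega
    subst hkk
    have hss : s = s' := by
      funext j
      obtain ⟨i, hi⟩ := fsurj k j
      have h5 : posn k i < 5 := by rw [hi]; exact j.isLt
      have hfin : (⟨posn k i, h5⟩ : Fin 5) = j := Fin.ext hi
      have hv := congrFun (show vB k s = vB k s' from h) i
      simp only [vB, dif_pos h5, hfin] at hv
      cases hs : s j <;> cases hs' : s' j <;> simp_all
    rw [hss]

def S : Finset (Fin 11 → ℤ) := Finset.image fv Finset.univ

set_option maxRecDepth 40000 in
/-- Sh(11, 3, 5) ≥ 2156: there exists a set of 2156 vectors in ℤ^11, each of squared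
Euclidean norm 5, such that the inner product between any two distinct vectors is at most 3. -/
theorem sh_11_3_5_ge :
    ∃ S : Finset (Fin 11 → ℤ),
      S.card = 2156 ∧
      (∀ v ∈ S, ∑ i, v i ^ 2 = 5) ∧
      (∀ u ∈ S, ∀ v ∈ S, u ≠ v → ∑ i, u i * v i ≤ 3) := by
  refine ⟨S, ?_, ?_, ?_⟩
  · rw [S, Finset.card_image_of_injective _ fv_inj, Finset.card_univ]
    rw [show (Fintype.card Pa) = 2156 from ?_]
    rw [Fintype.card_sum, Fintype.card_prod, Fintype.card_prod, Fintype.card_prod,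
      Fintype.card_fun, Fintype.card_fin, Fintype.card_fin, Fintype.card_bool,
      Fintype.card_fin]
    norm_num
  · intro v hv
    rw [S, Finset.mem_image] at hv
    obtain ⟨a, -, rfl⟩ := hv
    match a with
    | .inl (p, e, d) => exact fAnorm p e d
    | .inr (k, s) =>
      show ∑ i, (vB k s i)^2 = 5
      calc ∑ i, (vB k s i)^2 = ∑ i, ind k i := by simp only [vB_sq]
        _ = 5 := fBnorm k
  · intro u hu v hv huv
    rw [S, Finset.mem_image] at hu hv
    obtain ⟨a, -, rfl⟩ := hu
    obtain ⟨b, -, rfl⟩ := hv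
    have hab : a ≠ b := fun hh => huv (congrArg fv hh)
    match a, b with
    | .inl (p, e, d), .inl (p', e', d') =>
      exact fAA (p, e, d) (p', e', d') (fun hh => hab (congrArg Sum.inl hh))
    | .inl (p, e, d), .inr (k, s) => exact ipAB p e d k s
    | .inr (k, s), .inl (p, e, d) => exact ipBA p e d k s
    | .inr (k, s), .inr (k', s') =>
      by_cases hkk : k = k'
      · subst hkk
        refine ipBBsame k s s' fun hh => hab ?_
        rw [hh]
      · exact ipBBdiff k k' s s' hkk
end

section
/- Sh(13, 3, 5) ≥ 3988: there exists a set of 3988 vectors in ℤ^13, each of squared Euclidean norm 5, such that the inner product between any two distinct vectors in the set is at most 3. -/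
set_option maxRecDepth 100000

namespace Sh1335

def raw : List (List (Fin 13)) := [
  [0,1,2,3,8],
  [0,1,2,4,5],
  [0,1,2,6,12],
  [0,1,2,7,11],
  [0,1,3,4,7],
  [0,1,3,5,9],
  [0,1,3,6,11],
  [0,1,3,10,12],
  [0,1,4,8,9],
  [0,1,4,11,12],
  [0,1,5,6,7],
  [0,1,5,8,12],
  [0,1,5,10,11],
  [0,1,6,9,10],
  [0,1,7,8,10],
  [0,2,3,4,12],
  [0,2,3,5,7],
  [0,2,4,6,11],
  [0,2,4,7,8],
  [0,2,5,6,10],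
  [0,2,5,8,9],
  [0,2,6,7,9],
  [0,2,7,10,12],
  [0,2,8,11,12],
  [0,2,9,10,11],
  [0,3,4,5,6],
  [0,3,4,8,11],
  [0,3,4,9,10],
  [0,3,5,11,12],
  [0,3,6,7,12],
  [0,3,6,8,10],
  [0,3,7,8,9],
  [0,3,7,10,11],
  [0,4,5,7,12],
  [0,4,5,8,10],
  [0,4,5,9,11],
  [0,4,6,7,10],
  [0,4,6,8,12],
  [0,5,6,9,12],
  [0,5,7,8,11],
  [0,5,7,9,10],
  [0,6,8,9,11],
  [0,6,10,11,12],
  [0,7,9,11,12],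
  [0,8,9,10,12],
  [1,2,3,5,6],
  [1,2,3,11,12],
  [1,2,4,6,7],
  [1,2,4,8,12],
  [1,2,4,9,11],
  [1,2,5,7,10],
  [1,2,5,8,11],
  [1,2,6,10,11],
  [1,2,7,8,9],
  [1,2,9,10,12],
  [1,3,4,5,11],
  [1,3,4,6,12],
  [1,3,4,8,10],
  [1,3,5,7,12],
  [1,3,6,7,10],
  [1,3,6,8,9],
  [1,3,7,8,11],
  [1,3,9,10,11],
  [1,4,5,6,10],
  [1,4,5,7,8],
  [1,4,5,9,12],
  [1,4,6,8,11],
  [1,4,7,9,10],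
  [1,5,6,11,12],
  [1,5,7,9,11],
  [1,5,8,9,10],
  [1,6,7,9,12],
  [1,6,8,10,12],
  [1,7,10,11,12],
  [1,8,9,11,12],
  [2,3,4,5,8],
  [2,3,4,6,9],
  [2,3,4,7,10],
  [2,3,5,9,12],
  [2,3,5,10,11],
  [2,3,6,8,11],
  [2,3,6,10,12],
  [2,3,7,8,12],
  [2,3,7,9,11],
  [2,3,8,9,10],
  [2,4,5,6,12],
  [2,4,5,9,10],
  [2,4,6,8,10],
  [2,4,7,9,12],
  [2,4,10,11,12],
  [2,5,6,7,8],
  [2,5,6,9,11],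
  [2,5,7,11,12],
  [2,5,8,10,12],
  [2,6,8,9,12],
  [2,7,8,10,11],
  [3,4,5,7,9],
  [3,4,5,10,12],
  [3,4,6,7,8],
  [3,4,6,10,11],
  [3,4,7,11,12],
  [3,4,8,9,12],
  [3,5,6,7,11],
  [3,5,6,8,12],
  [3,5,6,9,10],
  [3,5,7,8,10],
  [3,5,8,9,11],
  [3,6,9,11,12],
  [3,7,9,10,12],
  [3,8,10,11,12],
  [4,5,6,8,9],
  [4,5,7,10,11],
  [4,5,8,11,12],
  [4,6,7,9,11],
  [4,6,9,10,12],
  [4,7,8,10,12],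
  [4,8,9,10,11],
  [5,6,7,10,12],
  [5,6,8,10,11],
  [5,7,8,9,12],
  [5,9,10,11,12],
  [6,7,8,9,10],
  [6,7,8,11,12]]


lemma raw_nodup : raw.Nodup := by decide

lemma raw_len5 : ∀ l ∈ raw, l.Nodup ∧ l.length = 5 := by decide

set_option maxHeartbeats 8000000 in
lemma raw_inter : ∀ l1 ∈ raw, ∀ l2 ∈ raw, l1 ≠ l2 → (l1.filter (· ∈ l2)).length ≤ 3 := by
  decide

def rawF : Finset (List (Fin 13)) := ⟨(raw : Multiset (List (Fin 13))),
  Multiset.coe_nodup.mpr raw_nodup⟩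

lemma mem_rawF {l : List (Fin 13)} : l ∈ rawF ↔ l ∈ raw := by
  simp [rawF, Finset.mem_mk]

lemma rawF_card : rawF.card = 123 := rfl

lemma card5 {l : List (Fin 13)} (h : l ∈ raw) : l.toFinset.card = 5 := by
  rw [List.toFinset_card_of_nodup (raw_len5 l h).1, (raw_len5 l h).2]

lemma toFinset_inj {l1 l2 : List (Fin 13)} (h1 : l1 ∈ raw) (h2 : l2 ∈ raw)
    (h : l1.toFinset = l2.toFinset) : l1 = l2 := by
  by_contra hne
  have key := raw_inter l1 h1 l2 h2 hne
  have hfil : l1.filter (· ∈ l2) = l1 := by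
    apply List.filter_eq_self.mpr
    intro x hx
    have : x ∈ l2 := by
      have : x ∈ l2.toFinset := h ▸ List.mem_toFinset.mpr hx
      exact List.mem_toFinset.mp this
    exact decide_eq_true this
  rw [hfil, (raw_len5 l1 h1).2] at key
  omega

lemma inter_card {l1 l2 : List (Fin 13)} (h1 : l1 ∈ raw) (h2 : l2 ∈ raw)
    (h : l1.toFinset ≠ l2.toFinset) : (l1.toFinset ∩ l2.toFinset).card ≤ 3 := by
  have hne : l1 ≠ l2 := fun h' => h (by rw [h'])
  have key := raw_inter l1 h1 l2 h2 hne
  have heq : l1.toFinset ∩ l2.toFinset = (l1.filter (· ∈ l2)).toFinset := by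
    ext x
    simp [List.mem_filter]
  calc (l1.toFinset ∩ l2.toFinset).card = (l1.filter (· ∈ l2)).toFinset.card := by rw [heq]
    _ ≤ (l1.filter (· ∈ l2)).length := (l1.filter (· ∈ l2)).toFinset_card_le
    _ ≤ 3 := key

/-- signed ±1 vector with support `s`. -/
def fA (s : Finset (Fin 13)) (ε : {x // x ∈ s} → Bool) : Fin 13 → ℤ :=
  fun i => if h : i ∈ s then (if ε ⟨i, h⟩ then 1 else -1) else 0

lemma fA_mem (s ε) {i : Fin 13} (h : i ∈ s) : fA s ε i = 1 ∨ fA s ε i = -1 := by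
  unfold fA
  rw [dif_pos h]
  by_cases hb : ε ⟨i, h⟩ <;> simp [hb]

lemma fA_notmem (s ε) {i : Fin 13} (h : i ∉ s) : fA s ε i = 0 := by
  unfold fA; rw [dif_neg h]

lemma fA_bound (s ε) (i : Fin 13) : -1 ≤ fA s ε i ∧ fA s ε i ≤ 1 := by
  by_cases h : i ∈ s
  · rcases fA_mem s ε h with h' | h' <;> rw [h'] <;> norm_num
  · rw [fA_notmem s ε h]; norm_num

lemma fA_ne_zero_iff (s ε) (i : Fin 13) : fA s ε i ≠ 0 ↔ i ∈ s := by
  constructor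
  · intro h
    by_contra hc
    exact h (fA_notmem s ε hc)
  · intro h
    rcases fA_mem s ε h with h' | h' <;> rw [h'] <;> norm_num

lemma fA_inj (s : Finset (Fin 13)) : Function.Injective (fA s) := by
  intro ε δ h
  funext x
  have hx := congrFun h x.1
  unfold fA at hx
  rw [dif_pos x.2, dif_pos x.2] at hx
  simp only [Subtype.coe_eta] at hx
  by_cases h1 : ε x <;> by_cases h2 : δ x <;> simp [h1, h2] at hx ⊢ <;> omega

lemma fA_supp_eq {s t : Finset (Fin 13)} {ε δ} (h : fA s ε = fA t δ) : s = t := by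
  ext i
  rw [← fA_ne_zero_iff s ε i, h, fA_ne_zero_iff]

def A : Finset (Fin 13 → ℤ) := rawF.biUnion (fun l => Finset.image (fA l.toFinset) Finset.univ)

lemma mem_A {v : Fin 13 → ℤ} (h : v ∈ A) :
    ∃ l ∈ raw, ∃ ε, v = fA l.toFinset ε := by
  rw [A, Finset.mem_biUnion] at h
  obtain ⟨l, hl, hv⟩ := h
  rw [Finset.mem_image] at hv
  obtain ⟨ε, _, hε⟩ := hv
  exact ⟨l, mem_rawF.mp hl, ε, hε.symm⟩

lemma A_card : A.card = 3936 := by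
  rw [A, Finset.card_biUnion]
  · have h : ∀ l ∈ rawF, (Finset.image (fA l.toFinset) Finset.univ).card = 32 := by
      intro l hl
      rw [Finset.card_image_of_injective _ (fA_inj l.toFinset), Finset.card_univ,
        Fintype.card_fun, Fintype.card_bool, Fintype.card_coe, card5 (mem_rawF.mp hl)]
      norm_num
    rw [Finset.sum_congr rfl h, Finset.sum_const, rawF_card]
    norm_num
  · intro l1 hl1 l2 hl2 hne
    rw [Function.onFun, Finset.disjoint_left]
    intro v hv hv'
    rw [Finset.mem_image] at hv hv'
    obtain ⟨ε, _, hε⟩ := hv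
    obtain ⟨δ, _, hδ⟩ := hv'
    exact hne (toFinset_inj (mem_rawF.mp hl1) (mem_rawF.mp hl2)
      (fA_supp_eq (hε.trans hδ.symm)))

def sg2 (a : Bool) : ℤ := if a then 2 else -2
def sg1 (b : Bool) : ℤ := if b then 1 else -1

/-- vector 2a·e_i + b·e_{i+1}. -/
def gB (p : Fin 13 × Bool × Bool) : Fin 13 → ℤ :=
  fun k => if k = p.1 then sg2 p.2.1 else if k = p.1 + 1 then sg1 p.2.2 else 0

def B : Finset (Fin 13 → ℤ) := Finset.image gB Finset.univ

lemma gB_inj : ∀ p q : Fin 13 × Bool × Bool, gB p = gB q → p = q := by decide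

lemma B_card : B.card = 52 := by
  rw [B, Finset.card_image_of_injective _ gB_inj, Finset.card_univ]
  rfl

lemma mem_B {v : Fin 13 → ℤ} (h : v ∈ B) : ∃ p, v = gB p := by
  rw [B, Finset.mem_image] at h
  obtain ⟨p, _, hp⟩ := h
  exact ⟨p, hp.symm⟩

lemma gB_norm : ∀ p, ∑ i, gB p i ^ 2 = 5 := by decide

lemma gB_ip : ∀ p q : Fin 13 × Bool × Bool, p ≠ q → ∑ i, gB p i * gB q i ≤ 3 := by decide

lemma AB_disjoint : Disjoint A B := by
  rw [Finset.disjoint_left]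
  intro v hvA hvB
  obtain ⟨l, _, ε, rfl⟩ := mem_A hvA
  obtain ⟨⟨i, a, b⟩, hp⟩ := mem_B hvB
  have h1 := (fA_bound l.toFinset ε i).1
  have h2 := (fA_bound l.toFinset ε i).2
  have h3 := congrFun hp i
  simp only [gB, if_pos rfl] at h3
  cases a <;> simp [sg2] at h3 <;> omega

lemma sum_restrict (F : Fin 13 → ℤ) (s : Finset (Fin 13)) (h : ∀ i ∉ s, F i = 0) :
    ∑ i, F i = ∑ i ∈ s, F i :=
  (Finset.sum_subset (Finset.subset_univ s) (fun i _ hi => h i hi)).symm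

lemma term_le_one {x y : ℤ} (hx1 : -1 ≤ x) (hx2 : x ≤ 1) (hy1 : -1 ≤ y) (hy2 : y ≤ 1) :
    x * y ≤ 1 := by nlinarith

lemma ipAA (s t : Finset (Fin 13)) (hs : s.card = 5)
    (hst : s ≠ t → (s ∩ t).card ≤ 3) (ε δ) (huv : fA s ε ≠ fA t δ) :
    ∑ i, fA s ε i * fA t δ i ≤ 3 := by
  have hrestrict : ∑ i, fA s ε i * fA t δ i = ∑ i ∈ s ∩ t, fA s ε i * fA t δ i := by
    apply sum_restrict
    intro i hi
    rw [Finset.mem_inter] at hi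
    push_neg at hi
    by_cases h : i ∈ s
    · rw [fA_notmem t δ (hi h), mul_zero]
    · rw [fA_notmem s ε h, zero_mul]
  have hterm : ∀ i, fA s ε i * fA t δ i ≤ 1 := by
    intro i
    exact term_le_one (fA_bound s ε i).1 (fA_bound s ε i).2 (fA_bound t δ i).1 (fA_bound t δ i).2
  by_cases hst' : s = t
  · subst hst'
    obtain ⟨i0, hi0⟩ : ∃ i0, fA s ε i0 ≠ fA s δ i0 := Function.ne_iff.mp huv
    have hi0s : i0 ∈ s := by
      by_contra hc
      exact hi0 ((fA_notmem s ε hc).trans (fA_notmem s δ hc).symm)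
    have hneg : fA s ε i0 * fA s δ i0 = -1 := by
      rcases fA_mem s ε hi0s with h1 | h1 <;> rcases fA_mem s δ hi0s with h2 | h2
      · exact absurd (h1.trans h2.symm) hi0
      · rw [h1, h2]; norm_num
      · rw [h1, h2]; norm_num
      · exact absurd (h1.trans h2.symm) hi0
    rw [hrestrict, Finset.inter_self, ← Finset.add_sum_erase s _ hi0s, hneg]
    have hsum : ∑ i ∈ s.erase i0, fA s ε i * fA s δ i ≤ (s.erase i0).card • (1 : ℤ) :=
      Finset.sum_le_card_nsmul _ _ 1 (fun i _ => hterm i)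
    rw [Finset.card_erase_of_mem hi0s, hs] at hsum
    simp only [nsmul_eq_mul] at hsum
    omega
  · have hc : (s ∩ t).card ≤ 3 := hst hst'
    rw [hrestrict]
    have hsum : ∑ i ∈ s ∩ t, fA s ε i * fA t δ i ≤ (s ∩ t).card • (1 : ℤ) :=
      Finset.sum_le_card_nsmul _ _ 1 (fun i _ => hterm i)
    simp only [nsmul_eq_mul] at hsum
    have hcast : ((s ∩ t).card : ℤ) ≤ 3 := by exact_mod_cast hc
    omega

lemma fin13_ne_succ : ∀ i : Fin 13, i ≠ i + 1 := by decide

lemma ipAB (s ε p) : ∑ k, fA s ε k * gB p k ≤ 3 := by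
  obtain ⟨i, a, b⟩ := p
  have hne' : i + 1 ≠ i := Ne.symm (fin13_ne_succ i)
  have hrestrict : ∑ k, fA s ε k * gB (i, a, b) k
      = ∑ k ∈ ({i, i + 1} : Finset (Fin 13)), fA s ε k * gB (i, a, b) k := by
    apply sum_restrict
    intro k hk
    simp only [Finset.mem_insert, Finset.mem_singleton] at hk
    push_neg at hk
    have hz : gB (i, a, b) k = 0 := by
      simp only [gB, if_neg hk.1, if_neg hk.2]
    rw [hz, mul_zero]
  rw [hrestrict, Finset.sum_pair (fin13_ne_succ i)]
  have hg1 : gB (i, a, b) i = sg2 a := by simp [gB]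
  have hg2 : gB (i, a, b) (i + 1) = sg1 b := by simp [gB, hne']
  rw [hg1, hg2]
  have h1 := fA_bound s ε i
  have h2 := fA_bound s ε (i + 1)
  cases a <;> cases b <;> simp [sg2, sg1] <;> nlinarith [h1.1, h1.2, h2.1, h2.2]

lemma normA (s : Finset (Fin 13)) (hs : s.card = 5) (ε) : ∑ i, fA s ε i ^ 2 = 5 := by
  have h1 : ∑ i, fA s ε i ^ 2 = ∑ i ∈ s, fA s ε i ^ 2 := by
    apply sum_restrict
    intro i hi
    rw [fA_notmem s ε hi]
    ring
  have h2 : ∑ i ∈ s, fA s ε i ^ 2 = ∑ _i ∈ s, (1 : ℤ) := by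
    apply Finset.sum_congr rfl
    intro i hi
    rcases fA_mem s ε hi with h | h <;> rw [h] <;> norm_num
  rw [h1, h2, Finset.sum_const, hs]
  norm_num

end Sh1335

open Sh1335 in
/-- Sh(13, 3, 5) ≥ 3988: there exists a set of 3988 vectors in ℤ^13, each of squared
Euclidean norm 5, such that the inner product between any two distinct vectors is at most 3. -/
theorem sh_13_3_5_ge :
    ∃ S : Finset (Fin 13 → ℤ),
      S.card = 3988 ∧
      (∀ v ∈ S, ∑ i, v i ^ 2 = 5) ∧
      (∀ u ∈ S, ∀ v ∈ S, u ≠ v → ∑ i, u i * v i ≤ 3) := by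
  refine ⟨A ∪ B, ?_, ?_, ?_⟩
  · rw [Finset.card_union_of_disjoint AB_disjoint, A_card, B_card]
  · intro v hv
    rcases Finset.mem_union.mp hv with h | h
    · obtain ⟨l, hl, ε, rfl⟩ := mem_A h
      exact normA l.toFinset (card5 hl) ε
    · obtain ⟨p, rfl⟩ := mem_B h
      exact gB_norm p
  · intro u hu v hv huv
    rcases Finset.mem_union.mp hu with h | h <;> rcases Finset.mem_union.mp hv with h' | h'
    · obtain ⟨l1, hl1, ε, rfl⟩ := mem_A h
      obtain ⟨l2, hl2, δ, rfl⟩ := mem_A h'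
      exact ipAA _ _ (card5 hl1) (fun hne => inter_card hl1 hl2 hne) ε δ huv
    · obtain ⟨l1, hl1, ε, rfl⟩ := mem_A h
      obtain ⟨p, rfl⟩ := mem_B h'
      exact ipAB _ ε p
    · obtain ⟨p, rfl⟩ := mem_B h
      obtain ⟨l1, hl1, ε, rfl⟩ := mem_A h'
      have hsym : ∑ i, gB p i * fA l1.toFinset ε i = ∑ i, fA l1.toFinset ε i * gB p i :=
        Finset.sum_congr rfl (fun i _ => mul_comm _ _)
      rw [hsym]
      exact ipAB _ ε p
    · obtain ⟨p, rfl⟩ := mem_B h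
      obtain ⟨q, rfl⟩ := mem_B h'
      exact gB_ip p q (fun hpq => huv (by rw [hpq]))
end
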